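/- Let P be a poset, X ⊆ P, and A₁, A₂ finite non-empty subsets of X with connected components D₁ of st(A₁) and D₂ of st(A₂). If C₀ is a connected subposet contained in D₁ ∩ D₂, then there is a connected component D₃ of st(A₁ ∪ A₂) with C₀ ⊆ D₃ ⊆ D₁ ∩ D₂. Consequently, the family {Γ(P,X)_{≤D} | D ∈ Γ_f(P,X)} is a basis-like open cover of Γ(P,X). -/

import Mathlib

/-- The star of an element: all elements comparable to `a`. -/
def starOf {α : Type*} [PartialOrder α] (a : α) : Set α := {x | x ≤ a ∨ a ≤ x}

/-- The star of a subset: elements comparable to every element of `A`. -/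
def starSetOf {α : Type*} [PartialOrder α] (A : Set α) : Set α := ⋂ a ∈ A, starOf a

/-- A subset is astral if it is contained in the star of some element. -/
def IsAstral {α : Type*} [PartialOrder α] (A : Set α) : Prop := ∃ x : α, A ⊆ starOf x

/-- One step of the comparability relation inside a subposet `S`. -/
def CompStep {α : Type*} [PartialOrder α] (S : Set α) (x y : α) : Prop :=
  x ∈ S ∧ y ∈ S ∧ (x ≤ y ∨ y ≤ x)

/-- `x` and `y` are connected inside the subposet `S`. -/
def ConnIn {α : Type*} [PartialOrder α] (S : Set α) (x y : α) : Prop :=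
  Relation.ReflTransGen (CompStep S) x y

/-- A subposet is connected (as a subposet, via comparability). -/
def IsConnSub {α : Type*} [PartialOrder α] (S : Set α) : Prop :=
  S.Nonempty ∧ ∀ x ∈ S, ∀ y ∈ S, ConnIn S x y

/-- The connected component of `x` in the subposet `S`. -/
def compOf {α : Type*} [PartialOrder α] (S : Set α) (x : α) : Set α :=
  {y | y ∈ S ∧ ConnIn S x y}

/-- `C` is a connected component of the subposet `S`. -/
def IsCompOf {α : Type*} [PartialOrder α] (S C : Set α) : Prop :=
  ∃ x ∈ S, C = compOf S x

/-- The crosscut poset `Γ(P,X)`: connected components of the nonempty `st(A)`, `∅ ≠ A ⊆ X`. -/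
def crosscutPoset {α : Type*} [PartialOrder α] (X : Set α) : Set (Set α) :=
  {C | ∃ A : Set α, A.Nonempty ∧ A ⊆ X ∧ IsCompOf (starSetOf A) C}

/-- The subposet `Γ_f(P,X)` coming from finite subsets `A ⊆ X`. -/
def crosscutPosetF {α : Type*} [PartialOrder α] (X : Set α) : Set (Set α) :=
  {C | ∃ A : Set α, A.Nonempty ∧ A.Finite ∧ A ⊆ X ∧ IsCompOf (starSetOf A) C}

/-- `X` is a cutset: every finite chain extends to a chain by an element of `X`. -/
def IsCutset {α : Type*} [PartialOrder α] (X : Set α) : Prop :=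
  ∀ σ : Set α, σ.Finite → IsChain (· ≤ ·) σ → ∃ a ∈ X, IsChain (· ≤ ·) (insert a σ)

/-- A subset `X` is coherent: every finite nonempty bounded subset of `X` has a meet or a join. -/
def IsCoherent {α : Type*} [PartialOrder α] (X : Set α) : Prop :=
  ∀ A ⊆ X, A.Finite → A.Nonempty → (BddAbove A ∨ BddBelow A) →
    (∃ z, IsGLB A z) ∨ (∃ z, IsLUB A z)

/-- The simplices of the crosscut complex `Γ_C(P,X)`: nonempty finite astral subsets of `X`. -/
def IsCCSimplex {α : Type*} [PartialOrder α] (X σ : Set α) : Prop :=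
  σ ⊆ X ∧ σ.Finite ∧ σ.Nonempty ∧ IsAstral σ

/-- `I_X(D) = {x ∈ X | D ⊆ st(x)}`. -/
def astralIdx {α : Type*} [PartialOrder α] (X D : Set α) : Set α :=
  {x ∈ X | D ⊆ starOf x}

/-- The set of maximal elements of a poset. -/
def mxlSet (α : Type*) [PartialOrder α] : Set α := {a | ∀ b, a ≤ b → b = a}

/-- The set of minimal elements of a poset. -/
def mnlSet (α : Type*) [PartialOrder α] : Set α := {a | ∀ b, b ≤ a → b = a}

/-- Type synonym carrying the Alexandroff topology (down-sets are open) of a preorder. -/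
def AlexSp (β : Type*) := β

instance {β : Type*} [Preorder β] : Preorder (AlexSp β) := inferInstanceAs (Preorder β)
instance {β : Type*} [PartialOrder β] : PartialOrder (AlexSp β) :=
  inferInstanceAs (PartialOrder β)

instance {β : Type*} [Preorder β] : TopologicalSpace (AlexSp β) where
  IsOpen U := IsLowerSet U
  isOpen_univ := isLowerSet_univ
  isOpen_inter _ _ h₁ h₂ := h₁.inter h₂
  isOpen_sUnion _ h := isLowerSet_sUnion h

/-!
Since `st(A₁ ∪ A₂) = st(A₁) ∩ st(A₂)`, everything reduces to how components behave under
shrinking the ambient subposet: a connected set inside `S ∩ T` lies in one component of `S ∩ T`,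
and that component stays inside whichever components of `S` and of `T` it meets. Finally,
replacing `A` by a singleton `{a} ⊆ A` enlarges the star, so every component of `st(A)` lies in a
component coming from a finite set.
-/

section Crosscut

variable {α : Type*} [PartialOrder α] {S T C D : Set α} {x y : α}

instance (S : Set α) : Std.Symm (CompStep S) where
  symm _ _ h := ⟨h.2.1, h.1, h.2.2.symm⟩

namespace ConnIn

lemma mono (hST : S ⊆ T) (h : ConnIn S x y) : ConnIn T x y :=
  Relation.ReflTransGen.mono (fun _ _ hab => ⟨hST hab.1, hST hab.2.1, hab.2.2⟩) _ _ h

lemma symm (h : ConnIn S x y) : ConnIn S y x :=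
  Std.Symm.symm (r := Relation.ReflTransGen (CompStep S)) _ _ h

lemma within_compOf (h : ConnIn S x y) : ConnIn (compOf S x) x y := by
  induction h with
  | refl => exact .refl
  | @tail b c hxb hbc ih => exact ih.tail ⟨⟨hbc.1, hxb⟩, ⟨hbc.2.1, hxb.tail hbc⟩, hbc.2.2⟩

end ConnIn

lemma starSetOf_union (A B : Set α) : starSetOf (A ∪ B) = starSetOf A ∩ starSetOf B :=
  Set.biInter_union A B starOf

lemma starSetOf_anti {A B : Set α} (h : A ⊆ B) : starSetOf B ⊆ starSetOf A :=
  Set.biInter_subset_biInter_left h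

lemma compOf_subset_self : compOf S x ⊆ S := fun _ hy => hy.1

lemma mem_compOf_self (hx : x ∈ S) : x ∈ compOf S x := ⟨hx, .refl⟩

lemma compOf_mono (hST : S ⊆ T) : compOf S x ⊆ compOf T x :=
  fun _ hy => ⟨hST hy.1, hy.2.mono hST⟩

lemma compOf_subset_of_mem (hy : y ∈ compOf S x) : compOf S y ⊆ compOf S x :=
  fun _ hz => ⟨hz.1, hy.2.trans hz.2⟩

lemma isConnSub_compOf (hx : x ∈ S) : IsConnSub (compOf S x) :=
  ⟨⟨x, mem_compOf_self hx⟩, fun _ ha _ hb => ha.2.within_compOf.symm.trans hb.2.within_compOf⟩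

lemma IsCompOf.isConnSub (hD : IsCompOf S D) : IsConnSub D := by
  obtain ⟨x, hx, rfl⟩ := hD
  exact isConnSub_compOf hx

lemma IsCompOf.subset (hD : IsCompOf S D) : D ⊆ S := by
  obtain ⟨x, -, rfl⟩ := hD
  exact compOf_subset_self

lemma IsCompOf.compOf_subset (hD : IsCompOf S D) (hx : x ∈ D) (hTS : T ⊆ S) :
    compOf T x ⊆ D := by
  obtain ⟨x₀, -, rfl⟩ := hD
  exact (compOf_mono hTS).trans (compOf_subset_of_mem hx)

lemma IsCompOf.exists_superset (hC : IsCompOf S C) (hST : S ⊆ T) :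
    ∃ D, IsCompOf T D ∧ C ⊆ D := by
  obtain ⟨x, hx, rfl⟩ := hC
  exact ⟨compOf T x, ⟨x, hST hx, rfl⟩, compOf_mono hST⟩

lemma IsConnSub.subset_compOf (hC : IsConnSub C) (hCS : C ⊆ S) (hx : x ∈ C) :
    C ⊆ compOf S x :=
  fun _ hy => ⟨hCS hy, (hC.2 x hx _ hy).mono hCS⟩

lemma IsConnSub.exists_isCompOf_inter {D₁ D₂ : Set α} (hC : IsConnSub C)
    (h₁ : IsCompOf S D₁) (h₂ : IsCompOf T D₂) (hCD : C ⊆ D₁ ∩ D₂) :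
    ∃ D₃, IsCompOf (S ∩ T) D₃ ∧ C ⊆ D₃ ∧ D₃ ⊆ D₁ ∩ D₂ := by
  obtain ⟨x, hx⟩ := hC.1
  have hCST : C ⊆ S ∩ T := hCD.trans (Set.inter_subset_inter h₁.subset h₂.subset)
  exact ⟨compOf (S ∩ T) x, ⟨x, hCST hx, rfl⟩, hC.subset_compOf hCST hx,
    Set.subset_inter (h₁.compOf_subset (hCD hx).1 Set.inter_subset_left)
      (h₂.compOf_subset (hCD hx).2 Set.inter_subset_right)⟩

lemma IsConnSub.exists_isCompOf_starSetOf_union {A₁ A₂ D₁ D₂ : Set α} (hC : IsConnSub C)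
    (h₁ : IsCompOf (starSetOf A₁) D₁) (h₂ : IsCompOf (starSetOf A₂) D₂) (hCD : C ⊆ D₁ ∩ D₂) :
    ∃ D₃, IsCompOf (starSetOf (A₁ ∪ A₂)) D₃ ∧ C ⊆ D₃ ∧ D₃ ⊆ D₁ ∩ D₂ := by
  rw [starSetOf_union]
  exact hC.exists_isCompOf_inter h₁ h₂ hCD

lemma exists_mem_crosscutPosetF_superset {X : Set α} (hC : C ∈ crosscutPoset X) :
    ∃ D ∈ crosscutPosetF X, C ⊆ D := by
  obtain ⟨A, ⟨a, ha⟩, hAX, hC⟩ := hC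
  obtain ⟨D, hD, hCD⟩ := hC.exists_superset (starSetOf_anti (Set.singleton_subset_iff.2 ha))
  exact ⟨D, ⟨{a}, Set.singleton_nonempty a, Set.finite_singleton a,
    Set.singleton_subset_iff.2 (hAX ha), hD⟩, hCD⟩

lemma IsConnSub.exists_mem_crosscutPosetF_subset_inter {X D₁ D₂ : Set α} (hC : IsConnSub C)
    (hD₁ : D₁ ∈ crosscutPosetF X) (hD₂ : D₂ ∈ crosscutPosetF X) (hCD : C ⊆ D₁ ∩ D₂) :
    ∃ D₃ ∈ crosscutPosetF X, C ⊆ D₃ ∧ D₃ ⊆ D₁ ∩ D₂ := by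
  obtain ⟨A₁, hA₁, hA₁f, hA₁X, h₁⟩ := hD₁
  obtain ⟨A₂, -, hA₂f, hA₂X, h₂⟩ := hD₂
  obtain ⟨D₃, hD₃, hCD₃⟩ := hC.exists_isCompOf_starSetOf_union h₁ h₂ hCD
  exact ⟨D₃, ⟨A₁ ∪ A₂, hA₁.inl, hA₁f.union hA₂f, Set.union_subset hA₁X hA₂X, hD₃⟩, hCD₃⟩

end Crosscut

/-- Components over finite unions, and the family `{Γ(P,X)_{≤D} | D ∈ Γ_f(P,X)}` is a
basis-like open cover of `Γ(P,X)`. -/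
theorem stmt_19 {α : Type*} [PartialOrder α] {X : Set α} :
    (∀ A₁ A₂ D₁ D₂ C₀ : Set α,
        A₁ ⊆ X → A₁.Finite → A₁.Nonempty → A₂ ⊆ X → A₂.Finite → A₂.Nonempty →
        IsCompOf (starSetOf A₁) D₁ → IsCompOf (starSetOf A₂) D₂ →
        IsConnSub C₀ → C₀ ⊆ D₁ ∩ D₂ →
        ∃ D₃, IsCompOf (starSetOf (A₁ ∪ A₂)) D₃ ∧ C₀ ⊆ D₃ ∧ D₃ ⊆ D₁ ∩ D₂) ∧
      (∀ C ∈ crosscutPoset X, ∃ D ∈ crosscutPosetF X, C ⊆ D) ∧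
      (∀ D₁ ∈ crosscutPosetF X, ∀ D₂ ∈ crosscutPosetF X, ∀ C ∈ crosscutPoset X,
        C ⊆ D₁ → C ⊆ D₂ →
        ∃ D₃ ∈ crosscutPosetF X, C ⊆ D₃ ∧
          ∀ C' ∈ crosscutPoset X, C' ⊆ D₃ → C' ⊆ D₁ ∧ C' ⊆ D₂) := by
  refine ⟨fun _ _ _ _ _ _ _ _ _ _ _ h₁ h₂ hC hCD => hC.exists_isCompOf_starSetOf_union h₁ h₂ hCD,
    fun _ hC => exists_mem_crosscutPosetF_superset hC, ?_⟩
  rintro D₁ hD₁ D₂ hD₂ C ⟨A, -, -, hC⟩ hCD₁ hCD₂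
  obtain ⟨D₃, hD₃, hCD₃, hD₃D⟩ :=
    hC.isConnSub.exists_mem_crosscutPosetF_subset_inter hD₁ hD₂ (Set.subset_inter hCD₁ hCD₂)
  exact ⟨D₃, hD₃, hCD₃, fun _ _ hC' => Set.subset_inter_iff.1 (hC'.trans hD₃D)⟩
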